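/- arXiv:1301.2045 — 2 statements merged into one kernel-verified Lean document; each statement's English description precedes it below -/
import Mathlib

section
/- Let D be an integral domain with quotient field K, p ∈ D[X] monic of degree n, and C_p ∈ M_n(D) the companion matrix of p. Then Int(D[C_p], M_n(D)) = Int(D[C_p], D[C_p]); that is, a polynomial f ∈ K[X] satisfies f(N) ∈ M_n(D) for every N ∈ D[C_p] if and only if f(N) ∈ D[C_p] for every N ∈ D[C_p]. -/
/-! The companion matrix `C_q` of a monic `q` is the matrix of multiplication by the root of `q`
in the power basis of `R[X]/(q)`, so `F(C_q)` is multiplication by `F` and its first column is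
the coefficient vector of `F %ₘ q`. Let `q` be `p` read in `K[X]`. Then `f(g(C_p))`, computed
over `K`, is `(f ∘ g)(C_q)`; if its entries lie in `D`, so do the coefficients of
`(f ∘ g) %ₘ q`, which is therefore the image of some `r ∈ D[X]`, and `f(g(C_p)) = r(C_p)`. -/

/-- The companion matrix of a monic polynomial `p` of degree `n`: ones on the subdiagonal
and `-p.coeff i` as the `i`-th entry of the last column. -/
def companionMatrix {D : Type*} [CommRing D] (n : ℕ) (p : Polynomial D) :
    Matrix (Fin n) (Fin n) D :=
  Matrix.of fun i j =>
    if (j : ℕ) = n - 1 then -p.coeff i else if (i : ℕ) = (j : ℕ) + 1 then 1 else 0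

open Polynomial

section
variable {R : Type*} [CommRing R]

theorem Matrix.map_aeval {S : Type*} [CommRing S] [Algebra R S] {m : Type*} [Fintype m]
    [DecidableEq m] (M : Matrix m m R) (g : R[X]) :
    (aeval M g).map (algebraMap R S) =
      aeval (M.map (algebraMap R S)) (g.map (algebraMap R S)) :=
  map_aeval_eq_aeval_map (ψ := (algebraMap R S).mapMatrix)
    (by ext; simp [Matrix.algebraMap_matrix_apply, apply_ite (algebraMap R S)]) g M

theorem companionMatrix_map {S : Type*} [CommRing S] (φ : R →+* S) (n : ℕ) (p : R[X]) :
    (companionMatrix n p).map φ = companionMatrix n (p.map φ) := by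
  ext i j
  simp only [companionMatrix, Matrix.map_apply, Matrix.of_apply, coeff_map]
  split_ifs <;> simp

theorem Polynomial.Monic.X_pow_natDegree_modByMonic {q : R[X]} (hq : q.Monic) :
    X ^ q.natDegree %ₘ q = X ^ q.natDegree - q := by
  nontriviality R
  have h : X ^ q.natDegree - q = -q.eraseLead := by
    rw [← self_sub_C_mul_X_pow, hq.leadingCoeff, C_1, one_mul]
    ring
  rw [modByMonic_eq_of_dvd_sub hq (p₂ := X ^ q.natDegree - q) ⟨1, by ring⟩,
    modByMonic_eq_self_iff hq, h, degree_neg]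
  exact degree_eraseLead_lt hq.ne_zero

theorem AdjoinRoot.leftMulMatrix_root_eq_companionMatrix {q : R[X]} (hq : q.Monic) :
    Algebra.leftMulMatrix (powerBasisAux' hq) (root q) = companionMatrix q.natDegree q := by
  ext i j
  have hb : powerBasisAux' hq j = root q ^ (j : ℕ) := (powerBasis' hq).basis_eq_pow j
  rw [Algebra.leftMulMatrix_eq_repr_mul, hb, ← pow_succ', ← mk_X, ← map_pow,
    powerBasisAux'_repr_apply_to_fun, modByMonicHom_mk]
  simp only [companionMatrix, Matrix.of_apply]
  by_cases hj : (j : ℕ) = q.natDegree - 1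
  · rw [if_pos hj, show (j : ℕ) + 1 = q.natDegree by omega, hq.X_pow_natDegree_modByMonic,
      coeff_sub, coeff_X_pow, if_neg i.isLt.ne, zero_sub]
  · nontriviality R
    have hlt : (X ^ ((j : ℕ) + 1) : R[X]).degree < q.degree := by
      rw [degree_X_pow, degree_eq_natDegree hq.ne_zero]
      exact_mod_cast (by omega : (j : ℕ) + 1 < q.natDegree)
    rw [if_neg hj, (modByMonic_eq_self_iff hq).mpr hlt, coeff_X_pow]

theorem aeval_companionMatrix {q : R[X]} (hq : q.Monic) (f : R[X]) :
    aeval (companionMatrix q.natDegree q) f =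
      Algebra.leftMulMatrix (AdjoinRoot.powerBasisAux' hq) (AdjoinRoot.mk q f) := by
  rw [← AdjoinRoot.leftMulMatrix_root_eq_companionMatrix hq, aeval_algHom_apply,
    AdjoinRoot.aeval_eq]

theorem aeval_companionMatrix_modByMonic {n : ℕ} {q : R[X]} (hq : q.Monic)
    (hn : q.natDegree = n) (f : R[X]) :
    aeval (companionMatrix n q) (f %ₘ q) = aeval (companionMatrix n q) f := by
  subst hn
  rw [aeval_companionMatrix hq, aeval_companionMatrix hq, ← AdjoinRoot.modByMonicHom_mk hq,
    AdjoinRoot.mk_leftInverse hq]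

theorem aeval_companionMatrix_apply_zero {n : ℕ} [NeZero n] {q : R[X]} (hq : q.Monic)
    (hn : q.natDegree = n) (f : R[X]) (i : Fin n) :
    aeval (companionMatrix n q) f i 0 = (f %ₘ q).coeff i := by
  subst hn
  have hb : AdjoinRoot.powerBasisAux' hq 0 = 1 := by
    rw [← pow_zero (AdjoinRoot.root q), ← Fin.val_zero q.natDegree]
    exact (AdjoinRoot.powerBasis' hq).basis_eq_pow (0 : Fin q.natDegree)
  rw [aeval_companionMatrix hq, Algebra.leftMulMatrix_eq_repr_mul, hb, mul_one,
    AdjoinRoot.powerBasisAux'_repr_apply_to_fun, AdjoinRoot.modByMonicHom_mk]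

end

theorem modByMonic_mem_lifts_of_aeval_companionMatrix {R S : Type*} [Ring R] [CommRing S]
    (φ : R →+* S) {n : ℕ} {q : S[X]} (hq : q.Monic) (hn : q.natDegree = n) {f : S[X]}
    (hf : ∀ i j, aeval (companionMatrix n q) f i j ∈ φ.range) : f %ₘ q ∈ lifts φ := by
  rw [lifts_iff_coeff_lifts]
  intro k
  by_cases hk : k < n
  · have : NeZero n := ⟨by omega⟩
    rw [show k = ((⟨k, hk⟩ : Fin n) : ℕ) from rfl, ← aeval_companionMatrix_apply_zero hq hn]
    exact hf _ _
  · have hzero : (f %ₘ q).coeff k = 0 := by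
      nontriviality S
      refine coeff_eq_zero_of_degree_lt ((degree_modByMonic_lt f hq).trans_le ?_)
      rw [degree_eq_natDegree hq.ne_zero, hn]
      exact_mod_cast Nat.le_of_not_lt hk
    exact hzero ▸ ⟨0, map_zero φ⟩

theorem stmt_5_general (D : Type*) [CommRing D] (K : Type*) [Field K]
    [Algebra D K] (n : ℕ) (p : Polynomial D)
    (hmonic : p.Monic) (hdeg : p.natDegree = n) :
    {f : Polynomial K | ∀ N : Matrix (Fin n) (Fin n) D,
        (∃ g : Polynomial D, Polynomial.aeval (companionMatrix n p) g = N) →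
        ∀ i j : Fin n,
          (Polynomial.aeval (N.map (algebraMap D K)) f) i j ∈ (algebraMap D K).range} =
      {f : Polynomial K | ∀ N : Matrix (Fin n) (Fin n) D,
        (∃ g : Polynomial D, Polynomial.aeval (companionMatrix n p) g = N) →
        ∃ h : Polynomial D,
          (Polynomial.aeval (companionMatrix n p) h).map (algebraMap D K) =
            Polynomial.aeval (N.map (algebraMap D K)) f} := by
  ext f
  refine ⟨fun hf N hN => ?_, fun hf N hN i j => ?_⟩
  · obtain ⟨g, rfl⟩ := hN
    set q := p.map (algebraMap D K)
    have hq : q.Monic := hmonic.map _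
    have hqn : q.natDegree = n := (hmonic.natDegree_map _).trans hdeg
    have hcomp : aeval (companionMatrix n q) (f.comp (g.map (algebraMap D K))) =
        aeval ((aeval (companionMatrix n p) g).map (algebraMap D K)) f := by
      rw [aeval_comp, Matrix.map_aeval, companionMatrix_map]
    obtain ⟨r, hr⟩ := modByMonic_mem_lifts_of_aeval_companionMatrix (algebraMap D K) hq hqn
      fun i j => hcomp ▸ hf _ ⟨g, rfl⟩ i j
    rw [coe_mapRingHom] at hr
    refine ⟨r, ?_⟩
    rw [Matrix.map_aeval, companionMatrix_map, hr, aeval_companionMatrix_modByMonic hq hqn, hcomp]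
  · obtain ⟨h, hh⟩ := hf N hN
    rw [← hh]
    exact ⟨_, rfl⟩

/-- Let `D` be an integral domain with quotient field `K`, `p ∈ D[X]` monic
of degree `n`, and `C_p ∈ M_n(D)` the companion matrix of `p`.  Then
`Int(D[C_p], M_n(D)) = Int(D[C_p], D[C_p])`: a polynomial `f ∈ K[X]` maps every element `N`
of the `D`-algebra `D[C_p] = {g(C_p) : g ∈ D[X]}` to a matrix with entries in `D` if and
only if it maps every such `N` into `D[C_p]` itself (values are computed in `M_n(K)`). -/
theorem stmt_5 (D : Type*) [CommRing D] [IsDomain D] (K : Type*) [Field K]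
    [Algebra D K] [IsFractionRing D K] (n : ℕ) (p : Polynomial D)
    (hmonic : p.Monic) (hdeg : p.natDegree = n) :
    {f : Polynomial K | ∀ N : Matrix (Fin n) (Fin n) D,
        (∃ g : Polynomial D, Polynomial.aeval (companionMatrix n p) g = N) →
        ∀ i j : Fin n,
          (Polynomial.aeval (N.map (algebraMap D K)) f) i j ∈ (algebraMap D K).range} =
      {f : Polynomial K | ∀ N : Matrix (Fin n) (Fin n) D,
        (∃ g : Polynomial D, Polynomial.aeval (companionMatrix n p) g = N) →
        ∃ h : Polynomial D,
          (Polynomial.aeval (companionMatrix n p) h).map (algebraMap D K) =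
            Polynomial.aeval (N.map (algebraMap D K)) f} :=
  stmt_5_general D K n p hmonic hdeg
end

section
/- For every positive integer n, Int_ℚ(A_n, 𝒜_n) = ⋂_{K} Int_ℚ(O_K), where the intersection runs over all number fields K of degree exactly n; that is, f ∈ ℚ[X] maps every algebraic integer of degree exactly n to an algebraic integer if and only if f(O_K) ⊆ O_K for every number field K of degree n. -/
/-!
For `α` of degree `n`, `ℚ(α)` is a number field of degree `n` containing `α` as an integer, which
gives one inclusion. Conversely let `x ∈ 𝓞 K` and let `θ ∈ 𝓞 K` generate `K`. If two distinct
`k, k'` gave `ℚ(x + kθ) = ℚ(x + k'θ)`, this field would contain `θ`, so it would be `K`; as `K` has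
only finitely many subfields, `x + kθ` generates `K`, hence has degree `n`, for all but finitely
many `k ∈ ℤ`. Thus `g(k) = f(x + kθ)` is integral for `deg f + 1` consecutive integers `k < 0`.
Since `g` is a polynomial in `k` of degree at most `deg f`, the Gregory–Newton formula writes
`g(0) = f(x)` as an integer combination of these values.
-/

open Polynomial IntermediateField

theorem Polynomial.eval_add_natCast_mem_of_forall_le_natDegree {R S : Type*} [CommRing R]
    [SetLike S R] [AddSubgroupClass S R] (s : S) {P : R[X]} {a : R}
    (h : ∀ i ≤ P.natDegree, P.eval (a + i) ∈ s) (m : ℕ) :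
    P.eval (a + m) ∈ s := by
  have hdiff : ∀ k, (fwdDiff 1)^[k] P.eval a ∈ s := by
    intro k
    rcases le_or_gt k P.natDegree with hk | hk
    · rw [fwdDiff_iter_eq_sum_shift]
      refine sum_mem fun j hj => zsmul_mem ?_ _
      have hj : j ≤ k := Nat.lt_succ_iff.mp (Finset.mem_range.mp hj)
      simpa using h j (hj.trans hk)
    · rw [fwdDiff_iter_eq_zero_of_degree_lt hk]
      exact zero_mem s
  have hnewton := shift_eq_sum_fwdDiff_iter 1 P.eval m a
  rw [nsmul_one] at hnewton
  exact hnewton ▸ sum_mem fun k _ => nsmul_mem (hdiff k) _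

theorem isIntegral_aeval_of_isIntegral_aeval_add_intCast_smul {R : Type*} [CommRing R]
    [Algebra ℚ R] (f : ℚ[X]) (x θ : R) {a : ℤ} (ha : a ≤ 0)
    (h : ∀ k : ℤ, a ≤ k → k ≤ a + f.natDegree → IsIntegral ℤ (aeval (x + (k : ℚ) • θ) f)) :
    IsIntegral ℤ (aeval x f) := by
  set P : R[X] := (f.map (algebraMap ℚ R)).comp (C θ * X + C x)
  have hP : ∀ k : ℤ, P.eval (k : R) = aeval (x + (k : ℚ) • θ) f := fun k => by
    rw [eval_comp, eval_map_algebraMap, eval_add, eval_mul, eval_C, eval_C, eval_X,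
      Int.cast_smul_eq_zsmul, zsmul_eq_mul, mul_comm, add_comm]
  have hdeg : P.natDegree ≤ f.natDegree := natDegree_comp_le.trans <|
    (Nat.mul_le_mul natDegree_map_le (natDegree_linear_le (b := x))).trans_eq (mul_one _)
  have hline : ∀ i ≤ P.natDegree, P.eval ((a : R) + i) ∈ integralClosure ℤ R := fun i hi => by
    rw [mem_integralClosure_iff, ← Int.cast_natCast, ← Int.cast_add, hP]
    exact h _ (by omega) (by omega)
  have h0 := P.eval_add_natCast_mem_of_forall_le_natDegree (integralClosure ℤ R) hline (-a).toNat
  rwa [← Int.cast_natCast, ← Int.cast_add, show a + ((-a).toNat : ℤ) = 0 by omega, hP,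
    Int.cast_zero, zero_smul, add_zero] at h0

theorem IntermediateField.finite_setOf_adjoin_add_smul_ne_top {F E : Type*} [Field F] [Field E]
    [Algebra F E] [Algebra.IsAlgebraic F E] {θ : E} (hθ : F⟮θ⟯ = ⊤) (x : E) :
    {c : F | F⟮x + c • θ⟯ ≠ ⊤}.Finite := by
  have := Field.finite_intermediateField_of_exists_primitive_element F E ⟨θ, hθ⟩
  refine Set.Finite.of_finite_image (f := fun c => F⟮x + c • θ⟯) (Set.toFinite _)
    fun c hc c' _ (hcc' : F⟮x + c • θ⟯ = F⟮x + c' • θ⟯) => ?_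
  by_contra hne
  apply hc
  rw [eq_top_iff, ← hθ, adjoin_simple_le_iff]
  have hdiff : (c - c') • θ ∈ F⟮x + c • θ⟯ := by
    rw [sub_smul, show c • θ - c' • θ = (x + c • θ) - (x + c' • θ) by abel]
    exact sub_mem (mem_adjoin_simple_self F _) (hcc' ▸ mem_adjoin_simple_self F _)
  simpa [smul_smul, sub_ne_zero.mpr hne] using smul_mem _ hdiff (x := (c - c')⁻¹)

theorem NumberField.exists_isIntegral_primitive_element (K : Type*) [Field K] [NumberField K] :
    ∃ θ : K, IsIntegral ℤ θ ∧ ℚ⟮θ⟯ = ⊤ := by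
  obtain ⟨θ, hθ⟩ := Field.exists_primitive_element ℚ K
  obtain ⟨d, hd, hdθ⟩ := ((IsFractionRing.isAlgebraic_iff ℤ ℚ K).mpr
    (Algebra.IsAlgebraic.isAlgebraic θ)).exists_integral_multiple
  refine ⟨d • θ, hdθ, eq_top_iff.mpr (hθ ▸ adjoin_simple_le_iff.mpr ?_)⟩
  have hd' : (d : ℚ) ≠ 0 := Int.cast_ne_zero.mpr hd
  simpa [← Int.cast_smul_eq_zsmul ℚ, smul_smul, hd'] using
    smul_mem _ (mem_adjoin_simple_self ℚ (d • θ)) (x := (d : ℚ)⁻¹)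

theorem NumberField.isIntegral_aeval_of_forall_primitive_element {K : Type*} [Field K]
    [NumberField K] (f : ℚ[X])
    (hf : ∀ y : K, IsIntegral ℤ y → ℚ⟮y⟯ = ⊤ → IsIntegral ℤ (aeval y f))
    {x : K} (hx : IsIntegral ℤ x) : IsIntegral ℤ (aeval x f) := by
  obtain ⟨θ, hθint, hθ⟩ := exists_isIntegral_primitive_element K
  have hbad : {k : ℤ | ℚ⟮x + (k : ℚ) • θ⟯ ≠ ⊤}.Finite :=
    (finite_setOf_adjoin_add_smul_ne_top hθ x).preimage Int.cast_injective.injOn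
  obtain ⟨b, hb⟩ := hbad.bddBelow
  refine isIntegral_aeval_of_isIntegral_aeval_add_intCast_smul f x θ
    (a := min b 0 - 1 - f.natDegree) (by omega) fun k _ hk => hf _ ?_ ?_
  · rw [Int.cast_smul_eq_zsmul]
    exact hx.add (hθint.zsmul k)
  · by_contra hbad_k
    have := hb hbad_k
    omega

theorem stmt_12_general (n : ℕ) (f : Polynomial ℚ) :
    (∀ α : AlgebraicClosure ℚ, IsIntegral ℤ α → (minpoly ℚ α).natDegree = n →
        IsIntegral ℤ (Polynomial.aeval α f)) ↔
      (∀ (K : Type) (_ : Field K) (_ : NumberField K), Module.finrank ℚ K = n →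
        ∀ x : K, IsIntegral ℤ x → IsIntegral ℤ (Polynomial.aeval x f)) := by
  constructor
  · intro H K _ _ hK x hx
    refine NumberField.isIntegral_aeval_of_forall_primitive_element f (fun y hy hprim => ?_) hx
    let σ : K →ₐ[ℚ] AlgebraicClosure ℚ := IsAlgClosed.lift
    have hdeg : (minpoly ℚ (σ y)).natDegree = n := by
      rw [minpoly.algHom_eq σ σ.injective, ← hK,
        ← Field.primitive_element_iff_minpoly_natDegree_eq, hprim]
    have hσ := H (σ y) (hy.map σ) hdeg
    rw [aeval_algHom_apply] at hσ
    exact (isIntegral_algHom_iff (σ.restrictScalars ℤ) σ.injective).mp hσ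
  · intro H α hα hdeg
    have hαQ : IsIntegral ℚ α := hα.tower_top
    have : FiniteDimensional ℚ ℚ⟮α⟯ := adjoin.finiteDimensional hαQ
    have hgen : IsIntegral ℤ (AdjoinSimple.gen ℚ α) :=
      (isIntegral_algHom_iff (ℚ⟮α⟯.val.restrictScalars ℤ) Subtype.val_injective).mp hα
    have hK := H ℚ⟮α⟯ _ ⟨⟩ (by rw [adjoin.finrank hαQ, hdeg]) _ hgen
    rw [← AdjoinSimple.coe_aeval_gen_apply]
    exact hK.map (ℚ⟮α⟯.val.restrictScalars ℤ)

/-- For every positive integer `n`,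
`Int_ℚ(A_n, 𝒜_n) = ⋂_K Int_ℚ(O_K)`, the intersection running over all number fields `K` of
degree exactly `n`: a polynomial `f ∈ ℚ[X]` maps every algebraic integer of degree exactly
`n` (in a fixed algebraic closure of `ℚ`) to an algebraic integer if and only if
`f(O_K) ⊆ O_K` for every number field `K` of degree `n`. -/
theorem stmt_12 (n : ℕ) (hn : 0 < n) (f : Polynomial ℚ) :
    (∀ α : AlgebraicClosure ℚ, IsIntegral ℤ α → (minpoly ℚ α).natDegree = n →
        IsIntegral ℤ (Polynomial.aeval α f)) ↔
      (∀ (K : Type) (_ : Field K) (_ : NumberField K), Module.finrank ℚ K = n →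
        ∀ x : K, IsIntegral ℤ x → IsIntegral ℤ (Polynomial.aeval x f)) :=
  stmt_12_general n f
end
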